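/- Let ρ and ι be permutations of a finite set D with ι a fixed-point-free involution. If the group generated by ρ and ι acts transitively on D, then the combinatorial map (D, ρ, ι) encodes a connected surface, and the Euler characteristic c(ρ) - |D|/2 + c(ρ∘ι) is at most 2, where c(σ) denotes the number of cycles (orbits) of σ. -/

import Mathlib

/-
For permutations `σ, τ` of an `n`-element set write `c(σ)` for the number of cycles of `σ` and
`k(σ, τ)` for the number of orbits of `⟨σ, τ⟩`. Then `c(σ) + c(τ) + c(στ) ≤ n + 2 k(σ, τ)`:
every component of the hypermap `(σ, τ)` has nonnegative genus. Induct on `τ`: if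
`τ a = b ≠ a`, put `t = (a b)` and pass to `(σ t, t τ)`, which has the same product and a
second entry of smaller support. Adjoining `t` to a group of permutations merges the orbits of
`a` and `b` (if they are distinct), and `⟨σ, t⟩ = ⟨σ t, t⟩`, `⟨τ, t⟩ = ⟨t τ, t⟩`,
`⟨σ, τ, t⟩ = ⟨σ t, t τ, t⟩`; comparing orbit counts through these groups, the inequality for
the new pair gives the one for the old. For the map, `k(ρ, ι) ≤ 1` by transitivity and
`2 c(ι) ≥ n` because `ι` is an involution.
-/

/-- The number of orbits (cycles, including fixed points) of a permutation. -/
noncomputable def permOrbitCount {D : Type*} (σ : Equiv.Perm D) : ℕ :=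
  Nat.card (MulAction.orbitRel.Quotient (Subgroup.zpowers σ) D)

open Equiv Equiv.Perm MulAction Subgroup Function

theorem Function.range_update_id_of_ne {β : Type*} [DecidableEq β] {p q : β} (h : p ≠ q) :
    Set.range (update id q p) = {q}ᶜ := by
  ext r
  rw [Set.mem_range, Set.mem_compl_singleton_iff]
  constructor
  · rintro ⟨z, rfl⟩
    by_cases hz : z = q
    · simpa [hz] using h
    · simpa [update_of_ne hz] using hz
  · exact fun hr => ⟨r, by simp [update_of_ne hr]⟩

theorem Nat.card_compl_singleton_add_one {β : Type*} [Finite β] (q : β) :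
    Nat.card ({q}ᶜ : Set β) + 1 = Nat.card β := by
  rw [Nat.card_coe_set_eq, ← Set.ncard_univ, ← Set.ncard_sdiff_singleton_add_one (Set.mem_univ q),
    Set.compl_eq_univ_sdiff]

theorem MulAction.card_le_card_mul_card_orbitRel_quotient (G β : Type*) [Group G]
    [MulAction G β] [Finite G] [Finite β] :
    Nat.card β ≤ Nat.card G * Nat.card (orbitRel.Quotient G β) := by
  have := Fintype.ofFinite (orbitRel.Quotient G β)
  calc Nat.card β = ∑ ω : orbitRel.Quotient G β, Nat.card (orbit G ω.out) :=
        (Nat.card_congr (selfEquivSigmaOrbits G β)).trans Nat.card_sigma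
    _ ≤ ∑ _ω : orbitRel.Quotient G β, Nat.card G :=
        Finset.sum_le_sum fun ω _ => Finite.card_range_le (· • ω.out)
    _ = Nat.card G * Nat.card (orbitRel.Quotient G β) := by
        rw [Finset.sum_const, Finset.card_univ, smul_eq_mul,
          Nat.card_eq_fintype_card (α := orbitRel.Quotient G β), mul_comm]

theorem Subgroup.zpowers_mul_sup_zpowers_right {G : Type*} [Group G] (g h : G) :
    zpowers (g * h) ⊔ zpowers h = zpowers g ⊔ zpowers h := by
  refine le_antisymm (sup_le ?_ le_sup_right) (sup_le ?_ le_sup_right) <;> rw [zpowers_le]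
  · exact mul_mem (mem_sup_left (mem_zpowers g)) (mem_sup_right (mem_zpowers h))
  · simpa using
      mul_mem (mem_sup_left (mem_zpowers (g * h))) (mem_sup_right (inv_mem (mem_zpowers h)))

theorem Subgroup.zpowers_mul_sup_zpowers_left {G : Type*} [Group G] (g h : G) :
    zpowers (h * g) ⊔ zpowers h = zpowers g ⊔ zpowers h := by
  refine le_antisymm (sup_le ?_ le_sup_right) (sup_le ?_ le_sup_right) <;> rw [zpowers_le]
  · exact mul_mem (mem_sup_right (mem_zpowers h)) (mem_sup_left (mem_zpowers g))
  · simpa using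
      mul_mem (mem_sup_right (inv_mem (mem_zpowers h))) (mem_sup_left (mem_zpowers (h * g)))

theorem MulAction.orbitRel_subgroup_mono {G β : Type*} [Group G] [MulAction G β]
    {H K : Subgroup G} (h : H ≤ K) : orbitRel H β ≤ orbitRel K β := by
  rintro x y ⟨⟨g, hg⟩, rfl⟩
  exact ⟨⟨g, h hg⟩, rfl⟩

namespace Equiv.Perm

variable {α : Type*}

noncomputable def numOrbits (H : Subgroup (Perm α)) : ℕ :=
  Nat.card (orbitRel.Quotient H α)

theorem permOrbitCount_eq_numOrbits (σ : Perm α) : permOrbitCount σ = numOrbits (zpowers σ) :=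
  rfl

theorem numOrbits_le_card [Finite α] (H : Subgroup (Perm α)) : numOrbits H ≤ Nat.card α :=
  Nat.card_le_card_of_surjective _ Quotient.mk_surjective

theorem numOrbits_le_one_of_isPretransitive {H : Subgroup (Perm α)} [IsPretransitive H α] :
    numOrbits H ≤ 1 := by
  have := (pretransitive_iff_subsingleton_quotient H α).1 ‹_›
  exact Finite.card_le_one_iff_subsingleton.2 this

theorem card_le_two_mul_permOrbitCount [Finite α] {ι : Perm α} (hι : ι * ι = 1) :
    Nat.card α ≤ 2 * permOrbitCount ι := by
  have hord : orderOf ι ≤ 2 := orderOf_le_of_pow_eq_one two_pos (by rw [sq, hι])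
  calc Nat.card α ≤ Nat.card (zpowers ι) * permOrbitCount ι :=
        card_le_card_mul_card_orbitRel_quotient _ _
    _ ≤ 2 * permOrbitCount ι := by rw [Nat.card_zpowers]; gcongr

theorem orbitRel_zpowers_iff_sameCycle {σ : Perm α} {x y : α} :
    orbitRel (zpowers σ) α x y ↔ σ.SameCycle y x := by
  constructor
  · rintro ⟨⟨_, k, rfl⟩, rfl⟩
    exact ⟨k, rfl⟩
  · rintro ⟨k, rfl⟩
    exact ⟨⟨σ ^ k, k, rfl⟩, rfl⟩

section DecidableEq

variable [DecidableEq α]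

theorem sameCycle_mul_swap_of_not_sameCycle [Finite α] {σ : Perm α} {a b : α}
    (h : ¬ σ.SameCycle a b) : (σ * swap a b).SameCycle b a := by
  set τ := σ * swap a b
  -- `τ` maps `b ↦ σ a ↦ σ² a ↦ ⋯` until the `σ`-cycle of `a`, which avoids `b`, returns to `a`.
  have hwalk : ∀ k : ℕ, τ.SameCycle b a ∨ τ.SameCycle b ((σ ^ (k + 1)) a) := by
    intro k
    induction k with
    | zero => exact Or.inr ⟨1, by simp [τ]⟩
    | succ k ih =>
      refine ih.elim Or.inl fun hk => ?_
      by_cases hka : (σ ^ (k + 1)) a = a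
      · exact Or.inl (by rwa [hka] at hk)
      have hkb : (σ ^ (k + 1)) a ≠ b := fun e => h ⟨(k + 1 : ℕ), by exact_mod_cast e⟩
      right
      rw [pow_succ', mul_apply, ← swap_apply_of_ne_of_ne hka hkb, ← mul_apply]
      exact sameCycle_apply_right.2 hk
  obtain ⟨k, hk⟩ : ∃ k, k + 1 = orderOf σ := Nat.exists_add_one_eq.2 (orderOf_pos σ)
  simpa [hk, pow_orderOf_eq_one] using hwalk k

theorem orbitRel_sup_zpowers_swap (H : Subgroup (Perm α)) [DecidableEq (orbitRel.Quotient H α)]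
    (a b : α) :
    orbitRel ↥(H ⊔ zpowers (swap a b)) α = Setoid.ker
      (update id (Quotient.mk (orbitRel H α) b) (Quotient.mk _ a) ∘ Quotient.mk _) := by
  set π := Quotient.mk (orbitRel H α)
  set f := update id (π b) (π a)
  have hf : f (π a) = f (π b) := by
    by_cases hab : π a = π b <;> simp [f, hab]
  apply le_antisymm
  · suffices h : ∀ g ∈ H ⊔ zpowers (swap a b), ∀ y, f (π (g y)) = f (π y) by
      rintro x y ⟨⟨g, hg⟩, rfl⟩
      exact h g hg y
    intro g hg
    rw [← closure_eq H, zpowers_eq_closure, ← Subgroup.closure_union] at hg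
    induction hg using closure_induction with
    | mem g hg =>
      intro y
      rcases hg with hg | rfl
      · exact congrArg f (Quotient.sound ⟨⟨g, hg⟩, rfl⟩)
      · rcases eq_or_ne y a with rfl | hya
        · simpa using hf.symm
        rcases eq_or_ne y b with rfl | hyb
        · simpa using hf
        · rw [swap_apply_of_ne_of_ne hya hyb]
    | one => exact fun y => rfl
    | mul g h _ _ ihg ihh => exact fun y => (ihg (h y)).trans (ihh y)
    | inv g _ ihg => exact fun y => by simpa using (ihg (g⁻¹ y)).symm
  · intro x y hxy
    set R := orbitRel ↥(H ⊔ zpowers (swap a b)) α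
    have hR : orbitRel H α ≤ R := orbitRel_subgroup_mono le_sup_left
    have hba : R b a := ⟨⟨swap a b, mem_sup_right (mem_zpowers _)⟩, swap_apply_left a b⟩
    change f (π x) = f (π y) at hxy
    by_cases hx : π x = π b <;> by_cases hy : π y = π b <;>
      simp only [f, update_apply, hx, hy, if_true, if_false, id] at hxy
    · exact hR (Quotient.exact (hx.trans hy.symm))
    · exact R.trans' (R.trans' (hR (Quotient.exact hx)) hba) (hR (Quotient.exact hxy))
    · exact R.trans' (R.trans' (hR (Quotient.exact hxy)) (R.symm' hba))
        (hR (Quotient.exact hy.symm))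
    · exact hR (Quotient.exact hxy)

theorem numOrbits_sup_zpowers_swap_of_rel {H : Subgroup (Perm α)} {a b : α}
    (h : orbitRel H α a b) : numOrbits (H ⊔ zpowers (swap a b)) = numOrbits H := by
  classical
  have hid : update id (Quotient.mk (orbitRel H α) b) (Quotient.mk _ a) = id := by
    rw [Quotient.sound h]
    exact update_eq_self _ _
  rw [numOrbits, numOrbits, orbitRel.Quotient, orbitRel.Quotient, orbitRel_sup_zpowers_swap, hid,
    id_comp]
  exact congrArg (fun s => Nat.card (Quotient s)) (Setoid.ker_mk_eq _)

theorem numOrbits_sup_zpowers_swap_add_one [Finite α] {H : Subgroup (Perm α)} {a b : α}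
    (h : ¬ orbitRel H α a b) : numOrbits (H ⊔ zpowers (swap a b)) + 1 = numOrbits H := by
  classical
  rw [numOrbits, numOrbits, orbitRel.Quotient, orbitRel.Quotient, orbitRel_sup_zpowers_swap,
    Nat.card_congr (Setoid.quotientKerEquivRange _), Quotient.mk_surjective.range_comp,
    range_update_id_of_ne fun e => h (Quotient.exact e)]
  exact Nat.card_compl_singleton_add_one _

theorem numOrbits_le_numOrbits_sup_zpowers_swap_add_one [Finite α] (H : Subgroup (Perm α))
    (a b : α) : numOrbits H ≤ numOrbits (H ⊔ zpowers (swap a b)) + 1 := by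
  by_cases h : orbitRel H α a b
  · rw [numOrbits_sup_zpowers_swap_of_rel h]
    exact Nat.le_succ _
  · exact (numOrbits_sup_zpowers_swap_add_one h).ge

theorem permOrbitCount_swap_mul [Finite α] {τ : Perm α} {a : α} (ha : τ a ≠ a) :
    permOrbitCount (swap a (τ a) * τ) = permOrbitCount τ + 1 := by
  have hτ : orbitRel (zpowers τ) α a (τ a) :=
    orbitRel_zpowers_iff_sameCycle.2 (sameCycle_apply_left.2 (SameCycle.refl τ a))
  have htτ : ¬ orbitRel (zpowers (swap a (τ a) * τ)) α a (τ a) := by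
    rw [orbitRel_zpowers_iff_sameCycle]
    exact fun h => ha (h.eq_of_right (by simp [IsFixedPt]))
  rw [permOrbitCount_eq_numOrbits, permOrbitCount_eq_numOrbits,
    ← numOrbits_sup_zpowers_swap_add_one htτ, zpowers_mul_sup_zpowers_left,
    numOrbits_sup_zpowers_swap_of_rel hτ]

theorem permOrbitCount_add_add_le_of_mul_swap [Fintype α] {σ τ : Perm α} {a : α} (ha : τ a ≠ a)
    (h : permOrbitCount (σ * swap a (τ a)) + permOrbitCount (swap a (τ a) * τ) +
        permOrbitCount (σ * τ) ≤
      Fintype.card α + 2 * numOrbits (zpowers (σ * swap a (τ a)) ⊔ zpowers (swap a (τ a) * τ))) :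
    permOrbitCount σ + permOrbitCount τ + permOrbitCount (σ * τ) ≤
      Fintype.card α + 2 * numOrbits (zpowers σ ⊔ zpowers τ) := by
  have ctτ := permOrbitCount_swap_mul ha
  set t := swap a (τ a)
  have hτ : orbitRel (zpowers τ) α a (τ a) :=
    orbitRel_zpowers_iff_sameCycle.2 (sameCycle_apply_left.2 (SameCycle.refl τ a))
  have eσ := zpowers_mul_sup_zpowers_right σ t
  have ek : zpowers (σ * t) ⊔ zpowers (t * τ) ⊔ zpowers t = zpowers σ ⊔ zpowers τ ⊔ zpowers t := by
    rw [sup_sup_distrib_right, eσ, zpowers_mul_sup_zpowers_left, ← sup_sup_distrib_right]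
  have ck : numOrbits (zpowers σ ⊔ zpowers τ ⊔ zpowers t) = numOrbits (zpowers σ ⊔ zpowers τ) :=
    numOrbits_sup_zpowers_swap_of_rel (orbitRel_subgroup_mono le_sup_right hτ)
  by_cases hσt : orbitRel (zpowers (σ * t)) α a (τ a)
  · have cσt : numOrbits (zpowers (σ * t) ⊔ zpowers t) = permOrbitCount (σ * t) :=
      numOrbits_sup_zpowers_swap_of_rel hσt
    have cσ : permOrbitCount σ ≤ numOrbits (zpowers σ ⊔ zpowers t) + 1 :=
      numOrbits_le_numOrbits_sup_zpowers_swap_add_one _ _ _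
    have ck' : numOrbits (zpowers (σ * t) ⊔ zpowers (t * τ) ⊔ zpowers t) =
        numOrbits (zpowers (σ * t) ⊔ zpowers (t * τ)) :=
      numOrbits_sup_zpowers_swap_of_rel (orbitRel_subgroup_mono le_sup_left hσt)
    rw [eσ] at cσt
    rw [ek, ck] at ck'
    omega
  · -- `a` and `τ a` lie in different cycles of `σ t`, so `t` splits a cycle of `σ`.
    have hσ : orbitRel (zpowers σ) α a (τ a) := by
      by_contra hσ
      rw [orbitRel_zpowers_iff_sameCycle] at hσ hσt
      exact hσt (sameCycle_mul_swap_of_not_sameCycle fun h => hσ h.symm)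
    have cσ : numOrbits (zpowers σ ⊔ zpowers t) = permOrbitCount σ :=
      numOrbits_sup_zpowers_swap_of_rel hσ
    have cσt : numOrbits (zpowers (σ * t) ⊔ zpowers t) + 1 = permOrbitCount (σ * t) :=
      numOrbits_sup_zpowers_swap_add_one hσt
    have ck' := numOrbits_le_numOrbits_sup_zpowers_swap_add_one
      (zpowers (σ * t) ⊔ zpowers (t * τ)) a (τ a)
    rw [eσ] at cσt
    rw [ek, ck] at ck'
    omega

end DecidableEq

theorem permOrbitCount_add_permOrbitCount_add_permOrbitCount_mul_le [Fintype α]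
    (σ τ : Perm α) :
    permOrbitCount σ + permOrbitCount τ + permOrbitCount (σ * τ) ≤
      Fintype.card α + 2 * numOrbits (zpowers σ ⊔ zpowers τ) := by
  classical
  induction hk : τ.support.card using Nat.strong_induction_on generalizing σ τ with
  | _ k ih =>
  rcases eq_or_ne τ 1 with rfl | hτ
  · have h1 : permOrbitCount (1 : Perm α) ≤ Fintype.card α :=
      (numOrbits_le_card _).trans_eq Nat.card_eq_fintype_card
    have hσ : numOrbits (zpowers σ ⊔ zpowers 1) = permOrbitCount σ := by
      rw [zpowers_one_eq_bot, sup_bot_eq]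
      rfl
    rw [mul_one, hσ]
    omega
  · obtain ⟨a, ha⟩ : ∃ a, τ a ≠ a := not_forall.1 fun h => hτ (Equiv.ext h)
    refine permOrbitCount_add_add_le_of_mul_swap ha ?_
    have hmul : σ * swap a (τ a) * (swap a (τ a) * τ) = σ * τ := by
      rw [mul_assoc, swap_mul_self_mul]
    rw [← hmul]
    exact ih _ (hk ▸ card_support_swap_mul ha) _ _ rfl

end Equiv.Perm

theorem combinatorial_map_euler_char_le_two_general {D : Type*} [Fintype D]
    (ρ ι : Equiv.Perm D)
    (hinv : ι * ι = 1)
    (htrans : ∀ a b : D, b ∈ MulAction.orbit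
      (Subgroup.closure {ρ, ι} : Subgroup (Equiv.Perm D)) a) :
    (permOrbitCount ρ : ℤ) - (Fintype.card D : ℤ) / 2 +
      (permOrbitCount (ρ * ι) : ℤ) ≤ 2 := by
  have hconn : numOrbits (closure {ρ, ι}) ≤ 1 :=
    have : IsPretransitive (closure {ρ, ι}) D := ⟨htrans⟩
    numOrbits_le_one_of_isPretransitive
  rw [Set.insert_eq, Subgroup.closure_union, ← zpowers_eq_closure, ← zpowers_eq_closure] at hconn
  have hgenus := permOrbitCount_add_permOrbitCount_add_permOrbitCount_mul_le ρ ι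
  have hι := Nat.card_eq_fintype_card.symm.trans_le (card_le_two_mul_permOrbitCount hinv)
  omega

/-- Let `ρ` and `ι` be permutations of a finite set `D` with `ι` a
fixed-point-free involution.  If the group generated by `ρ` and `ι` acts
transitively on `D` (i.e. the combinatorial map `(D, ρ, ι)` encodes a
connected surface), then the Euler characteristic
`c(ρ) - |D|/2 + c(ρ∘ι)` is at most `2`, where `c(σ)` is the number of cycles
(orbits) of `σ`. -/
theorem combinatorial_map_euler_char_le_two {D : Type*} [Fintype D]
    [DecidableEq D] (ρ ι : Equiv.Perm D)
    (hfree : ∀ d, ι d ≠ d) (hinv : ι * ι = 1)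
    (htrans : ∀ a b : D, b ∈ MulAction.orbit
      (Subgroup.closure {ρ, ι} : Subgroup (Equiv.Perm D)) a) :
    (permOrbitCount ρ : ℤ) - (Fintype.card D : ℤ) / 2 +
      (permOrbitCount (ρ * ι) : ℤ) ≤ 2 :=
  combinatorial_map_euler_char_le_two_general ρ ι hinv htrans
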